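/- Let λ be one of the A_{2l}^{(2)} weights λ_S = (-l-1/2)Λ_0^c + μ_S or λ_S' = (-l-1/2)Λ_0^c + μ_S' for S ⊆ {1,...,l-1}. Then for every positive long real root α̃ = ±2ε_i + (2m+1)δ of A_{2l}^{(2)}, the pairing (λ + ρ, α̃^∨) lies in 1/4 + (1/2)Z, hence is not a nonpositive integer. -/
import Mathlib


noncomputable section

/-- The weight space of `A_{2l}^{(2)}`, with coordinates
(horizontal part in the basis `ε_1, …, ε_l`, coefficient of `δ`,
coefficient of `Λ₀ᶜ`). -/
abbrev Wt (l : ℕ) := (Fin l → ℝ) × ℝ × ℝ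

/-- The standard bilinear form: `(ε_i, ε_j) = δ_{ij}`, `(δ, Λ₀ᶜ) = 1`,
`(δ,δ) = (Λ₀ᶜ,Λ₀ᶜ) = (δ,ε_i) = (Λ₀ᶜ,ε_i) = 0`. -/
def formW (l : ℕ) (x y : Wt l) : ℝ :=
  (∑ t : Fin l, x.1 t * y.1 t) + x.2.1 * y.2.2 + x.2.2 * y.2.1

/-- Fundamental weights of `B_l`: `ω_m = ε_1 + ⋯ + ε_m` for `m < l`,
`ω_l = (1/2)(ε_1 + ⋯ + ε_l)` (1-based `m`). -/
def omegaW (l m : ℕ) : Fin l → ℝ :=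
  fun t => if m = l then 1 / 2 else if t.val + 1 ≤ m then 1 else 0

/-- The coefficient `i_j + 2 Σ_{s>j} (-1)^{s-j} i_s + (-1)^{k-j+1}(l + half)`
of `ω_{i_j}` (with `half = -1/2` for `μ_S` and `half = 1/2` for `μ_S'`). -/
def coefS (l k : ℕ) (i : Fin k → ℕ) (half : ℝ) (j : Fin k) : ℝ :=
  (i j : ℝ) + 2 * (∑ s ∈ Finset.Ioi j, (-1 : ℝ) ^ (s.val - j.val) * (i s : ℝ)) +
    (-1 : ℝ) ^ (k - j.val) * ((l : ℝ) + half)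

/-- The horizontal weight `μ_S`. -/
def muS (l k : ℕ) (i : Fin k → ℕ) : Fin l → ℝ :=
  fun t => ∑ j : Fin k, coefS l k i (-(1 / 2)) j * omegaW l (i j) t

/-- The horizontal weight `μ_S' = ω_l + Σ_j (…) ω_{i_j}`. -/
def muS' (l k : ℕ) (i : Fin k → ℕ) : Fin l → ℝ :=
  fun t => omegaW l l t + ∑ j : Fin k, coefS l k i (1 / 2) j * omegaW l (i j) t

lemma coef_int_aux (l k : ℕ) (i : Fin k → ℕ) (e : ℤ) (half : ℝ) (he : (e : ℝ) = 2 * half)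
    (j : Fin k) :
    2 * coefS l k i half j =
      ((2 * ((i j : ℤ) + 2 * (∑ s ∈ Finset.Ioi j, (-1 : ℤ) ^ (s.val - j.val) * (i s : ℤ)))
        + (-1 : ℤ) ^ (k - j.val) * (2 * (l : ℤ) + e) : ℤ) : ℝ) := by
  unfold coefS
  push_cast
  rw [he]
  ring

lemma mu_half_int (l k : ℕ) (hl : 1 ≤ l) (i : Fin k → ℕ)
    (hrange : ∀ j, 1 ≤ i j ∧ i j ≤ l - 1)
    (μ : Fin l → ℝ) (hμ : μ = muS l k i ∨ μ = muS' l k i) (idx : Fin l) :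
    ∃ c : ℤ, (c : ℝ) = 2 * μ idx := by
  have homega : ∀ j : Fin k, omegaW l (i j) idx
      = if idx.val + 1 ≤ i j then (1 : ℝ) else 0 := by
    intro j
    have hne : i j ≠ l := by have := hrange j; omega
    simp [omegaW, hne]
  have key : ∀ (e : ℤ) (half : ℝ), (e : ℝ) = 2 * half →
      ∃ c : ℤ, (c : ℝ) = 2 * ∑ j : Fin k, coefS l k i half j * omegaW l (i j) idx := by
    intro e half he
    refine ⟨∑ j : Fin k,
      (2 * ((i j : ℤ) + 2 * (∑ s ∈ Finset.Ioi j, (-1 : ℤ) ^ (s.val - j.val) * (i s : ℤ)))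
        + (-1 : ℤ) ^ (k - j.val) * (2 * (l : ℤ) + e))
        * (if idx.val + 1 ≤ i j then 1 else 0), ?_⟩
    rw [Finset.mul_sum]
    push_cast
    refine Finset.sum_congr rfl fun j _ => ?_
    have h2 := coef_int_aux l k i e half he j
    rw [homega j, show (2 : ℝ) * (coefS l k i half j * (if idx.val + 1 ≤ i j then (1:ℝ) else 0))
      = (2 * coefS l k i half j) * (if idx.val + 1 ≤ i j then (1:ℝ) else 0) by ring, h2]
    push_cast
    split_ifs <;> ring
  rcases hμ with h | h
  · obtain ⟨c, hc⟩ := key (-1) (-(1/2)) (by norm_num)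
    exact ⟨c, by rw [h]; simpa [muS] using hc⟩
  · obtain ⟨c, hc⟩ := key 1 (1/2) (by norm_num)
    refine ⟨c + 1, ?_⟩
    have hol : omegaW l l idx = 1 / 2 := by simp [omegaW]
    rw [h]
    simp only [muS', hol]
    push_cast
    rw [hc]
    ring

/-- for `λ ∈ {λ_S, λ_S'}` and every positive long real root
`α̃ = ±2ε_i + (2m+1)δ` of `A_{2l}^{(2)}`, the pairing `(λ+ρ, α̃^∨)` lies in
`1/4 + (1/2)ℤ`, hence is not a nonpositive integer. -/
theorem long_root_pairing_quarter (l : ℕ) (hl : 1 < l)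
    (k : ℕ) (i : Fin k → ℕ) (hmono : StrictMono i)
    (hrange : ∀ j, 1 ≤ i j ∧ i j ≤ l - 1)
    (μ : Fin l → ℝ) (hμ : μ = muS l k i ∨ μ = muS' l k i)
    (m : ℕ) (s : ℝ) (hs : s = 1 ∨ s = -1) (idx : Fin l) :
    let lam : Wt l := (μ, 0, -(l : ℝ) - 1 / 2)
    let rho : Wt l := (fun t => (l : ℝ) - (t.val : ℝ) - 1 / 2, 0, 2 * (l : ℝ) + 1)
    let alphaTilde : Wt l := (fun t => if t = idx then 2 * s else 0, 2 * (m : ℝ) + 1, 0)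
    let P : ℝ := 2 / formW l alphaTilde alphaTilde * formW l (lam + rho) alphaTilde
    (∃ z : ℤ, P = 1 / 4 + (z : ℝ) / 2) ∧ ¬∃ z : ℤ, z ≤ 0 ∧ P = (z : ℝ) := by
  intro lam rho alphaTilde P
  have hs2 : s * s = 1 := by rcases hs with h | h <;> rw [h] <;> norm_num
  have hαα : formW l alphaTilde alphaTilde = 4 := by
    simp only [alphaTilde, formW]
    rw [Finset.sum_eq_single idx (fun b _ hb => by simp [hb]) (by simp)]
    simp only [if_pos rfl, if_true]
    nlinarith [hs2]
  have hform : formW l (lam + rho) alphaTilde =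
      (μ idx + ((l : ℝ) - (idx.val : ℝ) - 1 / 2)) * (2 * s)
        + ((l : ℝ) + 1 / 2) * (2 * (m : ℝ) + 1) := by
    simp only [lam, rho, alphaTilde, formW, Prod.fst_add, Prod.snd_add, Pi.add_apply]
    rw [Finset.sum_eq_single idx (fun b _ hb => by simp [hb]) (by simp)]
    simp only [if_pos rfl, if_true]
    ring
  have hP : P = s * (μ idx + (l : ℝ) - (idx.val : ℝ) - 1 / 2)
      + ((2 * (l : ℝ) + 1) * (2 * (m : ℝ) + 1)) / 4 := by
    simp only [P, hαα, hform]
    ring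
  obtain ⟨c, hc⟩ := mu_half_int l k (by omega) i hrange μ hμ idx
  have hmu : μ idx = (c : ℝ) / 2 := by linarith
  have key : ∃ z : ℤ, P = 1 / 4 + (z : ℝ) / 2 := by
    rcases hs with h1 | h1
    · refine ⟨c + 2 * (l : ℤ) - 2 * (idx.val : ℤ) - 1 + 2 * l * m + l + m, ?_⟩
      rw [hP, h1, hmu]
      push_cast
      ring
    · refine ⟨-(c + 2 * (l : ℤ) - 2 * (idx.val : ℤ) - 1) + 2 * l * m + l + m, ?_⟩
      rw [hP, h1, hmu]
      push_cast
      ring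
  obtain ⟨z, hz⟩ := key
  refine ⟨⟨z, hz⟩, ?_⟩
  rintro ⟨w, _, hw⟩
  have hr : ((4 * w : ℤ) : ℝ) = ((1 + 2 * z : ℤ) : ℝ) := by
    push_cast
    rw [hw] at hz
    linarith
  have : (4 * w : ℤ) = 1 + 2 * z := by exact_mod_cast hr
  omega
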